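/- arXiv:1907.01133 — 6 statements merged into one kernel-verified Lean document; each statement's English description precedes it below -/
import Mathlib

section
/- Let I = (N, S, T, M) be a network coding instance that is (ε, R, n)-feasible with a corresponding network code {X_f : f ∈ S ∪ E}, and let e* be an edge of I with capacity R_{e*}. Suppose there exists a random variable Y = f_Y(X_S) (a deterministic function of the source message vector X_S) with support 𝒴 such that: (A) H(X_{e*} | Y) = 0; (B) H(X_S | Y) = Σ_{i∈S} H(X_i | Y); and (C) there exists y' ∈ 𝒴 such that |A_i(y')| ≥ |𝒳_i| / |𝒳_{e*}| for every source i ∈ S and |A^B(y')| ≤ ε·|A(y')|. Then the instance I' obtained from I by removing edge e* is (ε, R − R_{e*}·1, n)-feasible, where (R − R_{e*}·1)_i = max(0, R_i − R_{e*}). -/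
/-!
By (A) the message on `e*` is a function of `Y`. Subadditivity of entropy holds on every fibre
of `Y`, so (B) forces `H(X_S | Y = y) = ∑_i H(X_i | Y = y)` for each `y`; by the equality case
of Gibbs' inequality against the product of the marginals, every nonempty fibre `A(y)` is then
the product of its projections `A_i(y)`. Restricting each source `i` to `A_i(y')` therefore
confines the source vector to `A(y')`, where the message on `e*` is a constant that the decoders
can supply themselves. The restricted code errs only on `A^B(y')`, a fraction at most `ε` of
`|A(y')|` by (C), and `|A_i(y')| ≥ |𝒳_i| / |𝒳_{e*}|` leaves rate `R_i - R_{e*}` to source `i`.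
-/

open scoped Classical
open Finset

noncomputable section

/-- A network coding instance `I = (N, S, T, M)`: a finite directed acyclic graph with
edge capacities, source nodes (no incoming edges), terminal nodes (no outgoing edges),
and a demand relation (`demands s t` means terminal `t` demands source `s`). -/
structure NetworkInstance where
  V : Type
  [fintypeV : Fintype V]
  [decEqV : DecidableEq V]
  E : Finset (V × V)
  cap : V × V → ℝ
  cap_pos : ∀ e ∈ E, 0 < cap e
  S : Finset V
  T : Finset V
  demands : V → V → Prop
  src_no_in : ∀ s ∈ S, ∀ e ∈ E, e.2 ≠ s
  ter_no_out : ∀ t ∈ T, ∀ e ∈ E, e.1 ≠ t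
  disjointST : Disjoint S T
  acyclic : ∃ ord : V → ℕ, ∀ e ∈ E, ord e.1 < ord e.2

attribute [instance] NetworkInstance.fintypeV NetworkInstance.decEqV

/-- A network code of blocklength `n` and rate vector `R` on the instance `I`.
Sources are independent and uniform on their (finite, nonempty) alphabets, which is modelled
by taking the whole product of the source alphabets as the (uniform) sample space.
`ge e` is the global encoding function of edge `e` (a function of the source message vector),
`dec t` the decoding function of terminal `t` (a function of the messages on incoming edges
of `t`, producing reconstructions of the demanded sources).
`local_enc` states that the message on an edge `e = (u,v)` is determined by the messages on
the incoming edges of `u` (together with the source message at `u`, when `u` is a source).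
`rate` states `H(X_i) = log₂|𝒳_i| ≥ n·R_i`, and `capBound` states `log₂|𝒳_e| ≤ n·R_e`. -/
structure NetworkCode (I : NetworkInstance) (R : I.V → ℝ) (n : ℕ) where
  srcA : I.V → Type
  edgeA : I.V × I.V → Type
  [finSrc : ∀ v, Fintype (srcA v)]
  [finEdge : ∀ e, Fintype (edgeA e)]
  [neSrc : ∀ v, Nonempty (srcA v)]
  [neEdge : ∀ e, Nonempty (edgeA e)]
  ge : (e : I.V × I.V) → ((s : {v // v ∈ I.S}) → srcA s.1) → edgeA e
  dec : (t : {v // v ∈ I.T}) →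
    ((f : {e : I.V × I.V // e ∈ I.E ∧ e.2 = t.1}) → edgeA f.1) →
    ((s : {v // v ∈ I.S ∧ I.demands v t.1}) → srcA s.1)
  local_enc : ∀ e ∈ I.E, ∀ x y : ((s : {v // v ∈ I.S}) → srcA s.1),
    (∀ s : {v // v ∈ I.S}, (s : I.V) = e.1 → x s = y s) →
    (∀ f ∈ I.E, f.2 = e.1 → ge f x = ge f y) →
    ge e x = ge e y
  rate : ∀ v ∈ I.S, (2 : ℝ) ^ ((n : ℝ) * R v) ≤ Fintype.card (srcA v)
  capBound : ∀ e ∈ I.E, (Fintype.card (edgeA e) : ℝ) ≤ (2 : ℝ) ^ ((n : ℝ) * I.cap e)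

attribute [instance] NetworkCode.finSrc NetworkCode.finEdge NetworkCode.neSrc NetworkCode.neEdge

/-- The source message vector space `𝒳_S = ∏ 𝒳_i`; the sources being independent and
uniform, the probability space is the uniform distribution on `Msg`. -/
abbrev NetworkCode.Msg {I : NetworkInstance} {R : I.V → ℝ} {n : ℕ} (C : NetworkCode I R n) : Type :=
  (s : {v // v ∈ I.S}) → C.srcA s.1

/-- Terminal `t` decodes the source vector `x` correctly. -/
def NetworkCode.Correct {I : NetworkInstance} {R : I.V → ℝ} {n : ℕ} (C : NetworkCode I R n)
    (t : {v // v ∈ I.T}) (x : C.Msg) : Prop :=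
  C.dec t (fun f => C.ge f.1 x) = fun s : {v : I.V // v ∈ I.S ∧ I.demands v t.1} => x ⟨s.1, s.2.1⟩

/-- `x` is "good": every terminal decodes it correctly. -/
def NetworkCode.Good {I : NetworkInstance} {R : I.V → ℝ} {n : ℕ} (C : NetworkCode I R n)
    (x : C.Msg) : Prop := ∀ t, C.Correct t x

/-- The code has decoding error probability at most `ε` at every terminal
(w.r.t. the uniform distribution on source messages). -/
def NetworkCode.Achieves {I : NetworkInstance} {R : I.V → ℝ} {n : ℕ} (C : NetworkCode I R n)
    (ε : ℝ) : Prop :=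
  ∀ t : {v // v ∈ I.T},
    ((Finset.univ.filter fun x : C.Msg => ¬ C.Correct t x).card : ℝ) ≤ ε * Fintype.card C.Msg

/-- `I` is `(ε, R, n)`-feasible. -/
def Feasible (I : NetworkInstance) (ε : ℝ) (R : I.V → ℝ) (n : ℕ) : Prop :=
  ∃ C : NetworkCode I R n, C.Achieves ε

/-- The instance `I'` obtained from `I` by removing the edge `e`. -/
def NetworkInstance.removeEdge (I : NetworkInstance) (e : I.V × I.V) : NetworkInstance where
  V := I.V
  fintypeV := I.fintypeV
  decEqV := I.decEqV
  E := I.E.erase e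
  cap := I.cap
  cap_pos := fun f hf => I.cap_pos f (Finset.mem_of_mem_erase hf)
  S := I.S
  T := I.T
  demands := I.demands
  src_no_in := fun s hs f hf => I.src_no_in s hs f (Finset.mem_of_mem_erase hf)
  ter_no_out := fun t ht f hf => I.ter_no_out t ht f (Finset.mem_of_mem_erase hf)
  disjointST := I.disjointST
  acyclic := ⟨I.acyclic.choose, fun f hf => I.acyclic.choose_spec f (Finset.mem_of_mem_erase hf)⟩

/-- The reduced rate vector `R - R_{e*}·1`, i.e. `i ↦ max 0 (R_i - R_{e*})`. -/
def reducedRate (I : NetworkInstance) (R : I.V → ℝ) (e : I.V × I.V) : I.V → ℝ :=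
  fun v => max 0 (R v - I.cap e)

/-- Probability that the random variable `Z` (on the finite uniform sample space `Ω`)
takes the value `z`. -/
def prob {Ω : Type*} [Fintype Ω] {α : Type*} (Z : Ω → α) (z : α) : ℝ :=
  ((Finset.univ.filter fun ω => Z ω = z).card : ℝ) / (Fintype.card Ω : ℝ)

/-- Shannon entropy (in bits) of a random variable `Z` on the finite uniform sample space `Ω`. -/
def Hent {Ω : Type*} [Fintype Ω] {α : Type*} [Fintype α] (Z : Ω → α) : ℝ :=
  (∑ z : α, Real.negMulLog (prob Z z)) / Real.log 2

/-- Conditional Shannon entropy `H(Z | W) = H(Z, W) - H(W)`. -/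
def condH {Ω : Type*} [Fintype Ω] {α β : Type*} [Fintype α] [Fintype β]
    (Z : Ω → α) (W : Ω → β) : ℝ :=
  Hent (fun ω => (Z ω, W ω)) - Hent W

open Real

section Entropy

variable {Ω α : Type*}

/-- Entropy, in nats, of `Z` when `ω` is uniformly distributed on `F`. -/
def entropyOn [Fintype α] (Z : Ω → α) (F : Finset Ω) : ℝ :=
  ∑ z, negMulLog ((F.filter fun ω => Z ω = z).card / F.card)

lemma negMulLog_card_filter_div_nonneg (F : Finset Ω) (p : Ω → Prop) [DecidablePred p] :
    0 ≤ negMulLog ((F.filter p).card / F.card) :=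
  negMulLog_nonneg (by positivity)
    (div_le_one_of_le₀ (by exact_mod_cast card_filter_le _ _) (by positivity))

lemma entropyOn_nonneg [Fintype α] (Z : Ω → α) (F : Finset Ω) : 0 ≤ entropyOn Z F :=
  sum_nonneg fun _ _ => negMulLog_card_filter_div_nonneg _ _

lemma eq_of_entropyOn_eq_zero [Fintype α] {Z : Ω → α} {F : Finset Ω} (h : entropyOn Z F = 0)
    {ω₁ ω₂ : Ω} (h₁ : ω₁ ∈ F) (h₂ : ω₂ ∈ F) : Z ω₂ = Z ω₁ := by
  set c := (F.filter fun ω => Z ω = Z ω₁).card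
  have hc : 0 < c := card_pos.2 ⟨ω₁, mem_filter.2 ⟨h₁, rfl⟩⟩
  have hF : 0 < F.card := card_pos.2 ⟨ω₁, h₁⟩
  have hterm : negMulLog (c / F.card) = 0 :=
    (sum_eq_zero_iff_of_nonneg fun _ _ => negMulLog_card_filter_div_nonneg _ _).1 h _
      (mem_univ _)
  -- `negMulLog` vanishes on `(0, 1]` only at `1`, so the class of `Z ω₁` is all of `F`.
  have hcF : c = F.card := by
    refine le_antisymm (card_filter_le _ _) (not_lt.1 fun hlt => hterm.not_gt ?_)
    have hr : (c : ℝ) / F.card < 1 := (div_lt_one (by positivity)).2 (by exact_mod_cast hlt)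
    exact mul_pos_of_neg_of_neg (by simp only [neg_neg_iff_pos]; positivity)
      (log_neg (by positivity) hr)
  exact (card_filter_eq_iff.1 hcF) ω₂ h₂

lemma sum_card_filter_div_card [Fintype α] (Z : Ω → α) {F : Finset Ω} (hF : F.Nonempty) :
    ∑ z, ((F.filter fun ω => Z ω = z).card : ℝ) / F.card = 1 := by
  rw [← sum_div, div_eq_one_iff_eq (by positivity)]
  exact_mod_cast card_eq_sum_card_fiberwise (fun _ _ => mem_univ _) |>.symm

lemma sum_comp_eq_sum_card_filter_mul [Fintype α] (Z : Ω → α) (F : Finset Ω) (g : α → ℝ) :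
    ∑ ω ∈ F, g (Z ω) = ∑ z, (F.filter fun ω => Z ω = z).card * g z := by
  rw [← sum_fiberwise F Z]
  refine sum_congr rfl fun z _ => ?_
  rw [sum_congr rfl fun ω hω => by rw [(mem_filter.1 hω).2], sum_const, nsmul_eq_mul]

/-- Entropy is the mean surprisal. -/
lemma sum_log_card_filter_div_card [Fintype α] (Z : Ω → α) (F : Finset Ω) :
    ∑ ω ∈ F, log ((F.filter fun ω' => Z ω' = Z ω).card / F.card) = -(F.card * entropyOn Z F) := by
  rw [sum_comp_eq_sum_card_filter_mul Z F
    fun z => log ((F.filter fun ω' => Z ω' = z).card / F.card), entropyOn, mul_sum,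
    ← sum_neg_distrib]
  refine sum_congr rfl fun z _ => ?_
  rcases Nat.eq_zero_or_pos F.card with h | h
  · simp [card_eq_zero.1 h]
  · rw [negMulLog]; field_simp

variable [Fintype Ω]

lemma entropyOn_id (F : Finset Ω) : entropyOn (fun ω => ω) F = log F.card := by
  have hz : ∀ z, (F.filter fun ω => ω = z).card = if z ∈ F then 1 else 0 := fun z => by
    rw [card_eq_sum_ones, sum_filter, sum_ite_eq']
  simp only [entropyOn, hz, Nat.cast_ite, Nat.cast_one, Nat.cast_zero, ite_div, zero_div,
    apply_ite negMulLog, negMulLog_zero, sum_ite_mem, univ_inter, sum_const, nsmul_eq_mul]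
  rcases Nat.eq_zero_or_pos F.card with h | h
  · simp [card_eq_zero.1 h]
  · rw [negMulLog, one_div, log_inv]
    field_simp

abbrev fiber {β : Type*} (W : Ω → β) (w : β) : Finset Ω := univ.filter fun ω => W ω = w

lemma prob_nonneg {β : Type*} (W : Ω → β) (w : β) : 0 ≤ prob W w := by
  unfold prob; positivity

lemma prob_pos {β : Type*} {W : Ω → β} {w : β} (hw : (fiber W w).Nonempty) : 0 < prob W w := by
  have : Nonempty Ω := ⟨hw.choose⟩
  exact div_pos (by exact_mod_cast hw.card_pos) (by exact_mod_cast Fintype.card_pos)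

lemma prob_prodMk {β : Type*} (Z : Ω → α) (W : Ω → β) (z : α) (w : β) :
    prob (fun ω => (Z ω, W ω)) (z, w) =
      prob W w * (((fiber W w).filter fun ω => Z ω = z).card / (fiber W w).card) := by
  have hc : (univ.filter fun ω => (Z ω, W ω) = (z, w)) = (fiber W w).filter fun ω => Z ω = z := by
    ext ω; simp [and_comm]
  have hle := card_filter_le (fiber W w) fun ω => Z ω = z
  simp only [prob, hc]
  rcases Nat.eq_zero_or_pos (fiber W w).card with h | h
  · simp [h, Nat.le_zero.1 (h ▸ hle)]
  · field_simp

lemma sum_negMulLog_prob_prodMk [Fintype α] {β : Type*} (Z : Ω → α) (W : Ω → β) (w : β) :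
    ∑ z, negMulLog (prob (fun ω => (Z ω, W ω)) (z, w)) =
      negMulLog (prob W w) + prob W w * entropyOn Z (fiber W w) := by
  simp only [prob_prodMk, negMulLog_mul, sum_add_distrib, ← sum_mul, ← mul_sum, entropyOn]
  rcases (fiber W w).eq_empty_or_nonempty with h | h
  · simp [prob, h]
  · rw [sum_card_filter_div_card Z h, one_mul]

/-- `H(Z | W) = ∑_w P(W = w) H(Z | W = w)`, the factor `log 2` converting bits to nats. -/
lemma condH_mul_log_two [Fintype α] {β : Type*} [Fintype β] (Z : Ω → α) (W : Ω → β) :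
    condH Z W * log 2 = ∑ w, prob W w * entropyOn Z (fiber W w) := by
  have hlog : log 2 ≠ 0 := (log_pos one_lt_two).ne'
  simp only [condH, Hent, sub_mul, div_mul_cancel₀ _ hlog, Fintype.sum_prod_type_right,
    sum_negMulLog_prob_prodMk, sum_add_distrib, add_sub_cancel_left]

lemma eq_of_condH_eq_zero [Fintype α] {β : Type*} [Fintype β] {Z : Ω → α} {W : Ω → β}
    (h : condH Z W = 0) {ω₁ ω₂ : Ω} (hW : W ω₁ = W ω₂) : Z ω₁ = Z ω₂ := by
  have hsum : ∑ w, prob W w * entropyOn Z (fiber W w) = 0 := by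
    rw [← condH_mul_log_two, h, zero_mul]
  have hterm := (sum_eq_zero_iff_of_nonneg fun w _ =>
    mul_nonneg (prob_nonneg W w) (entropyOn_nonneg Z _)).1 hsum (W ω₁) (mem_univ _)
  exact (eq_of_entropyOn_eq_zero ((mul_eq_zero.1 hterm).resolve_left (prob_pos ⟨ω₁, by simp⟩).ne')
    (mem_filter.2 ⟨mem_univ _, rfl⟩) (mem_filter.2 ⟨mem_univ _, hW.symm⟩)).symm

end Entropy

section ProductSets

variable {ι : Type*} [Fintype ι] {σ : ι → Type*} [∀ i, Fintype (σ i)]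

def prodMarginal (A : Finset (∀ i, σ i)) (x : ∀ i, σ i) : ℝ :=
  ∏ i, ((A.filter fun y => y i = x i).card : ℝ) / A.card

lemma sum_prodMarginal [DecidableEq ι] {A : Finset (∀ i, σ i)} (hA : A.Nonempty) :
    ∑ x, prodMarginal A x = 1 := by
  unfold prodMarginal
  rw [← Fintype.piFinset_univ,
    ← prod_univ_sum _ fun i z => ((A.filter fun y => y i = z).card : ℝ) / A.card]
  rw [prod_congr rfl fun i _ => sum_card_filter_div_card (fun y : (∀ i, σ i) => y i) hA,
    prod_const_one]

/-- Gibbs' inequality for the uniform distribution on `A` against the product of its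
marginals, via `log t ≤ t - 1`. -/
lemma log_card_sub_sum_entropyOn_le {A : Finset (∀ i, σ i)} (hA : A.Nonempty) :
    log A.card - ∑ i, entropyOn (fun x => x i) A ≤ ∑ x ∈ A, prodMarginal A x - 1 := by
  have hcard : (0 : ℝ) < A.card := by exact_mod_cast hA.card_pos
  have hmarg : ∀ x ∈ A, ∀ i, (0 : ℝ) < (A.filter fun y => y i = x i).card / A.card :=
    fun x hx i => div_pos (by exact_mod_cast card_pos.2 ⟨x, by simp [hx]⟩) hcard
  have hlog : ∀ x ∈ A, log (A.card * prodMarginal A x) =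
      log A.card + ∑ i, log ((A.filter fun y => y i = x i).card / A.card) := fun x hx => by
    rw [prodMarginal, log_mul hcard.ne' (prod_pos fun i _ => hmarg x hx i).ne',
      log_prod fun i _ => (hmarg x hx i).ne']
  calc log A.card - ∑ i, entropyOn (fun x => x i) A
      = (1 / A.card) * ∑ x ∈ A, log (A.card * prodMarginal A x) := by
        rw [sum_congr rfl hlog, sum_add_distrib, sum_comm]
        simp only [sum_const, nsmul_eq_mul, sum_log_card_filter_div_card, sum_neg_distrib,
          ← mul_sum]
        field_simp
        ring
    _ ≤ (1 / A.card) * ∑ x ∈ A, (A.card * prodMarginal A x - 1) := by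
        gcongr with x hx
        exact log_le_sub_one_of_pos (mul_pos hcard (prod_pos fun i _ => hmarg x hx i))
    _ = ∑ x ∈ A, prodMarginal A x - 1 := by
        rw [sum_sub_distrib, ← mul_sum, sum_const, nsmul_eq_mul]
        field_simp

variable [DecidableEq ι]

lemma log_card_le_sum_entropyOn {A : Finset (∀ i, σ i)} (hA : A.Nonempty) :
    log A.card ≤ ∑ i, entropyOn (fun x => x i) A := by
  have hle : ∑ x ∈ A, prodMarginal A x ≤ ∑ x, prodMarginal A x :=
    sum_le_univ_sum_of_nonneg fun x => prod_nonneg fun i _ => by positivity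
  linarith [log_card_sub_sum_entropyOn_le hA, sum_prodMarginal hA]

lemma mem_of_log_card_eq_sum_entropyOn {A : Finset (∀ i, σ i)} (hA : A.Nonempty)
    (heq : log A.card = ∑ i, entropyOn (fun x => x i) A) {x : ∀ i, σ i}
    (hx : ∀ i, x i ∈ A.image fun y => y i) : x ∈ A := by
  -- Otherwise `prodMarginal A` puts mass at `x ∉ A` and Gibbs' inequality is strict.
  by_contra hxA
  have hqx : 0 < prodMarginal A x := prod_pos fun i _ => by
    obtain ⟨y, hy, hyx⟩ := mem_image.1 (hx i)
    exact div_pos (by exact_mod_cast card_pos.2 ⟨y, by simp [hy, hyx]⟩)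
      (by exact_mod_cast hA.card_pos)
  have hle : ∑ y ∈ insert x A, prodMarginal A y ≤ ∑ y, prodMarginal A y :=
    sum_le_univ_sum_of_nonneg fun y => prod_nonneg fun i _ => by positivity
  rw [sum_insert hxA, sum_prodMarginal hA] at hle
  linarith [log_card_sub_sum_entropyOn_le hA]

lemma eq_of_condH_eq_sum_condH {𝒴 : Type*} [Fintype 𝒴] {fY : (∀ i, σ i) → 𝒴}
    (hB : condH (fun x => x) fY = ∑ i, condH (fun x => x i) fY) {y : 𝒴}
    (hy : (fiber fY y).Nonempty) {x : ∀ i, σ i}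
    (hx : ∀ i, x i ∈ (fiber fY y).image fun z => z i) : fY x = y := by
  have hsum : ∑ w, prob fY w * log (fiber fY w).card =
      ∑ w, prob fY w * ∑ i, entropyOn (fun x => x i) (fiber fY w) := by
    have := congrArg (· * log 2) hB
    simp only [sum_mul, condH_mul_log_two, entropyOn_id] at this
    rw [this, sum_comm]
    simp only [mul_sum]
  have hle : ∀ w ∈ univ, prob fY w * log (fiber fY w).card ≤
      prob fY w * ∑ i, entropyOn (fun x => x i) (fiber fY w) := fun w _ => by
    rcases (fiber fY w).eq_empty_or_nonempty with h | h
    · simp [h, entropyOn]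
    · exact mul_le_mul_of_nonneg_left (log_card_le_sum_entropyOn h) (prob_nonneg fY w)
  have heq := (sum_eq_sum_iff_of_le hle).1 hsum y (mem_univ _)
  have hx := mem_of_log_card_eq_sum_entropyOn hy (mul_left_cancel₀ (prob_pos hy).ne' heq) hx
  exact (mem_filter.1 hx).2

end ProductSets

namespace NetworkCode

variable {I : NetworkInstance} {R : I.V → ℝ} {n : ℕ}

lemma Achieves.nonneg {C : NetworkCode I R n} {ε : ℝ} (h : C.Achieves ε) (t : {v // v ∈ I.T}) :
    0 ≤ ε :=
  nonneg_of_mul_nonneg_left ((Nat.cast_nonneg _).trans (h t))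
    (by exact_mod_cast Fintype.card_pos)

variable (C : NetworkCode I R n)

lemma nonempty_sources_of_not_correct {t : {v // v ∈ I.T}} {x : C.Msg} (h : ¬ C.Correct t x) :
    Nonempty {v // v ∈ I.S} := by
  by_contra hS
  exact h (funext fun s => (hS ⟨⟨s.1, s.2.1⟩⟩).elim)

lemma nonempty_of_card_div_card_le {α : Type*} {v : I.V} {e : I.V × I.V} {F : Finset α}
    (h : (Fintype.card (C.srcA v) : ℝ) / Fintype.card (C.edgeA e) ≤ F.card) : F.Nonempty := by
  have := Fintype.card_pos (α := C.srcA v)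
  have := Fintype.card_pos (α := C.edgeA e)
  exact card_pos.1 (by exact_mod_cast (by positivity : (0 : ℝ) < _).trans_le h)

lemma two_rpow_reducedRate_le {e : I.V × I.V} (he : e ∈ I.E) {v : I.V} (hv : v ∈ I.S) {m : ℝ}
    (h1 : 1 ≤ m) (hm : (Fintype.card (C.srcA v) : ℝ) / Fintype.card (C.edgeA e) ≤ m) :
    (2 : ℝ) ^ ((n : ℝ) * reducedRate I R e v) ≤ m := by
  unfold reducedRate
  rcases le_total (R v - I.cap e) 0 with h0 | h0
  · rwa [max_eq_left h0, mul_zero, Real.rpow_zero]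
  · rw [max_eq_right h0, mul_sub, Real.rpow_sub two_pos]
    exact (div_le_div₀ (by positivity) (C.rate v hv) (by exact_mod_cast Fintype.card_pos)
      (C.capBound e he)).trans hm

variable (B : (s : {v // v ∈ I.S}) → Finset (C.srcA s))

/-- The alphabet of source `v` cut down to `B v` (nothing changes at non-sources). -/
abbrev RestrictedAlphabet (v : I.V) : Type :=
  {a : C.srcA v // ∀ h : v ∈ I.S, a ∈ B ⟨v, h⟩}

lemma restrictedAlphabet_nonempty (hB : ∀ s, (B s).Nonempty) (v : I.V) :
    Nonempty (C.RestrictedAlphabet B v) := by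
  by_cases hv : v ∈ I.S
  · obtain ⟨a, ha⟩ := hB ⟨v, hv⟩
    exact ⟨⟨a, fun _ => ha⟩⟩
  · exact ⟨⟨Classical.arbitrary _, fun h => absurd h hv⟩⟩

lemma card_restrictedAlphabet {v : I.V} (hv : v ∈ I.S) :
    Fintype.card (C.RestrictedAlphabet B v) = (B ⟨v, hv⟩).card := by
  rw [Fintype.card_subtype]
  congr 1
  ext a
  simp only [mem_filter, mem_univ, true_and]
  exact ⟨fun h => h hv, fun h _ => h⟩

def embedRestricted (x : (s : {v // v ∈ I.S}) → C.RestrictedAlphabet B s) : C.Msg :=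
  fun s => (x s).1

lemma embedRestricted_injective : Function.Injective (C.embedRestricted B) :=
  fun _ _ h => funext fun s => Subtype.ext (congrFun h s)

lemma card_le_card_restrictedMsg {F : Finset C.Msg} (hF : ∀ x ∈ F, ∀ s, x s ∈ B s) :
    F.card ≤ Fintype.card ((s : {v // v ∈ I.S}) → C.RestrictedAlphabet B s) := by
  refine (card_le_card (t := univ.image (C.embedRestricted B)) fun x hx => ?_).trans card_image_le
  exact mem_image.2 ⟨fun s => ⟨x s, fun _ => hF x hx s⟩, mem_univ _, rfl⟩

def someRestrictedMsg (hB : ∀ s, (B s).Nonempty) :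
    (s : {v // v ∈ I.S}) → C.RestrictedAlphabet B s :=
  fun s => @Classical.arbitrary _ (C.restrictedAlphabet_nonempty B hB s)

lemma ge_embedRestricted_eq {𝒴 : Type*} [Fintype 𝒴] {fY : C.Msg → 𝒴} {e : I.V × I.V}
    (hA : condH (C.ge e) fY = 0) {y : 𝒴}
    (hfiber : ∀ x : C.Msg, Nonempty {v // v ∈ I.S} → (∀ s, x s ∈ B s) → fY x = y)
    (x₁ x₂ : (s : {v // v ∈ I.S}) → C.RestrictedAlphabet B s) :
    C.ge e (C.embedRestricted B x₁) = C.ge e (C.embedRestricted B x₂) := by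
  rcases isEmpty_or_nonempty {v // v ∈ I.S} with hS | hS
  · exact congrArg _ (Subsingleton.elim _ _)
  · exact eq_of_condH_eq_zero hA <| (hfiber _ hS fun s => (x₁ s).2 s.2).trans
      (hfiber _ hS fun s => (x₂ s).2 s.2).symm

variable {B} (e : I.V × I.V) (R' : I.V → ℝ) (hB : ∀ s, (B s).Nonempty)
  (hconst : ∀ x₁ x₂, C.ge e (C.embedRestricted B x₁) = C.ge e (C.embedRestricted B x₂))
  (hrate : ∀ v (hv : v ∈ I.S), (2 : ℝ) ^ ((n : ℝ) * R' v) ≤ (B ⟨v, hv⟩).card)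

/-- The code for `I` with `e` removed: sources are restricted to `B`, on which the message on
`e` is a constant that every decoder can supply itself. -/
def restrict : NetworkCode (I.removeEdge e) R' n where
  srcA := C.RestrictedAlphabet B
  edgeA := C.edgeA
  finSrc (v : I.V) := Subtype.fintype _
  finEdge := C.finEdge
  neSrc := C.restrictedAlphabet_nonempty B hB
  neEdge := C.neEdge
  ge f x := C.ge f (C.embedRestricted B x)
  dec t g s :=
    let a := C.dec t (fun f => if hf : f.1 ∈ I.E.erase e then g ⟨f.1, hf, f.2.2⟩
      else C.ge f.1 (C.embedRestricted B (C.someRestrictedMsg B hB))) s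
    if ha : a ∈ B ⟨s.1, s.2.1⟩ then ⟨a, fun _ => ha⟩ else C.someRestrictedMsg B hB ⟨s.1, s.2.1⟩
  local_enc f hf x y hsrc hin := by
    refine C.local_enc f (mem_of_mem_erase hf) _ _ (fun s hs => congrArg Subtype.val (hsrc s hs))
      fun f' hf' hf'f => ?_
    by_cases hfe : f' = e
    · subst hfe; exact hconst x y
    · exact hin f' (mem_erase.2 ⟨hfe, hf'⟩) hf'f
  rate v hv := by
    rw [C.card_restrictedAlphabet B hv]
    exact hrate v hv
  capBound f hf := C.capBound f (mem_of_mem_erase hf)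

lemma correct_restrict {t : {v // v ∈ I.T}} {x : (s : {v // v ∈ I.S}) → C.RestrictedAlphabet B s}
    (h : C.Correct t (C.embedRestricted B x)) :
    (C.restrict e R' hB hconst hrate).Correct t x := by
  funext s
  have hinput : (fun f : {f : I.V × I.V // f ∈ I.E ∧ f.2 = t.1} => if hf : f.1 ∈ I.E.erase e
      then C.ge f.1 (C.embedRestricted B x)
      else C.ge f.1 (C.embedRestricted B (C.someRestrictedMsg B hB))) =
      fun f : {f : I.V × I.V // f ∈ I.E ∧ f.2 = t.1} => C.ge f.1 (C.embedRestricted B x) := by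
    funext ⟨f, hfE, _⟩
    split_ifs with hf
    · rfl
    · obtain rfl : f = e := not_not.1 fun hfe => hf (mem_erase.2 ⟨hfe, hfE⟩)
      exact hconst _ x
  have hdec := congrFun h s
  simp only [restrict, hinput]
  rw [dif_pos (hdec ▸ (x ⟨s.1, s.2.1⟩).2 s.2.1)]
  exact Subtype.ext hdec

lemma achieves_restrict {ε : ℝ}
    (hbad : ∀ t, ((univ.filter fun x : C.Msg => (∀ s, x s ∈ B s) ∧ ¬ C.Correct t x).card : ℝ) ≤
      ε * Fintype.card ((s : {v // v ∈ I.S}) → C.RestrictedAlphabet B s)) :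
    (C.restrict e R' hB hconst hrate).Achieves ε := by
  refine fun t => le_trans ?_ (hbad t)
  refine Nat.cast_le.2 (card_le_card_of_injOn (C.embedRestricted B) (fun x hx => ?_)
    (C.embedRestricted_injective B).injOn)
  simp only [coe_filter, Set.mem_ofPred_eq, mem_univ, true_and] at hx ⊢
  exact ⟨fun s => (x s).2 s.2, fun h => hx (C.correct_restrict e R' hB hconst hrate h)⟩

end NetworkCode

/-- **Theorem 1 (sufficient condition for local edge removal).**
If `I` is `(ε,R,n)`-feasible with code `C`, `e*` an edge of `I`, and there is a random
variable `Y = f_Y(X_S)` with (A) `H(X_{e*}|Y) = 0`, (B) `H(X_S|Y) = Σ_i H(X_i|Y)`, and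
(C) some `y'` with `|A_i(y')| ≥ |𝒳_i|/|𝒳_{e*}|` for all `i ∈ S` and `|A^B(y')| ≤ ε|A(y')|`,
then removing `e*` leaves the instance `(ε, R - R_{e*}·1, n)`-feasible. -/
theorem local_edge_removal_of_aux_rv
    (I : NetworkInstance) (ε : ℝ) (R : I.V → ℝ) (n : ℕ)
    (C : NetworkCode I R n) (hfeas : C.Achieves ε)
    (estar : I.V × I.V) (he : estar ∈ I.E)
    (𝒴 : Type) [Fintype 𝒴] (fY : C.Msg → 𝒴)
    (hA : condH (C.ge estar) fY = 0)
    (hB : condH (fun x : C.Msg => x) fY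
        = ∑ s : {v // v ∈ I.S}, condH (fun x : C.Msg => x s) fY)
    (hC : ∃ y' : 𝒴,
      (∀ s : {v // v ∈ I.S},
        (Fintype.card (C.srcA s.1) : ℝ) / (Fintype.card (C.edgeA estar) : ℝ) ≤
          (((Finset.univ.filter fun x : C.Msg => fY x = y').image fun x => x s).card : ℝ)) ∧
      ((Finset.univ.filter fun x : C.Msg => fY x = y' ∧ ¬ C.Good x).card : ℝ) ≤
        ε * ((Finset.univ.filter fun x : C.Msg => fY x = y').card : ℝ)) :
    Feasible (I.removeEdge estar) ε (reducedRate I R estar) n := by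
  obtain ⟨y, hcard, hbad⟩ := hC
  set A : (s : {v // v ∈ I.S}) → Finset (C.srcA s) := fun s => (fiber fY y).image fun x => x s
  have hAne : ∀ s, (A s).Nonempty := fun s => C.nonempty_of_card_div_card_le (hcard s)
  have hfiber : ∀ x : C.Msg, Nonempty {v // v ∈ I.S} → (∀ s, x s ∈ A s) → fY x = y :=
    fun x _ hx => eq_of_condH_eq_sum_condH hB (image_nonempty.1 (hAne (Classical.arbitrary _))) hx
  refine ⟨C.restrict estar _ hAne (C.ge_embedRestricted_eq A hA hfiber) fun v hv =>
      C.two_rpow_reducedRate_le he hv ?_ (hcard ⟨v, hv⟩), C.achieves_restrict _ _ _ _ _ fun t => ?_⟩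
  · exact_mod_cast (hAne ⟨v, hv⟩).card_pos
  calc ((univ.filter fun x : C.Msg => (∀ s, x s ∈ A s) ∧ ¬ C.Correct t x).card : ℝ)
      ≤ ((univ.filter fun x : C.Msg => fY x = y ∧ ¬ C.Good x).card : ℝ) := by
        refine Nat.cast_le.2 (card_le_card fun x hx => ?_)
        simp only [mem_filter, mem_univ, true_and] at hx ⊢
        exact ⟨hfiber x (C.nonempty_sources_of_not_correct hx.2) hx.1, fun h => hx.2 (h t)⟩
    _ ≤ ε * (fiber fY y).card := hbad
    _ ≤ ε * Fintype.card ((s : {v // v ∈ I.S}) → C.RestrictedAlphabet A s) := by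
        gcongr
        · exact hfeas.nonneg t
        · exact_mod_cast C.card_le_card_restrictedMsg A fun x hx s => mem_image_of_mem _ hx

end
end

section
/- Let I be a network coding instance and let 0 < ε < 1/2. If I is (ε, R, n)-feasible by a group network code, then I is (0, R, n)-feasible by a group network code. -/
open scoped Classical
open Finset

noncomputable section

/-- A group characterization of a network code: a finite group `G` with subgroups `G_f` for
every source and every edge, together with a balanced map `lift : G → 𝒳_S` (pushing the
uniform distribution on `G` to the uniform distribution on source vectors), such that the
value of each source (resp. edge) message is, up to bijective relabeling, the left coset of
`G_f` of the uniform group element; w.l.o.g. `∩_{i∈S} G_i = {1}`. There is no restriction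
on the decoding functions. -/
structure GroupChar {I : NetworkInstance} {R : I.V → ℝ} {n : ℕ}
    (C : NetworkCode I R n) where
  G : Type
  [grp : Group G]
  [fin : Fintype G]
  Gs : {v // v ∈ I.S} → Subgroup G
  Ge : {e : I.V × I.V // e ∈ I.E} → Subgroup G
  lift : G → C.Msg
  balanced : ∀ x : C.Msg,
    (Finset.univ.filter fun g : G => lift g = x).card * Fintype.card C.Msg = Fintype.card G
  src_char : ∀ s : {v // v ∈ I.S}, ∀ g g' : G,
    g⁻¹ * g' ∈ Gs s ↔ lift g s = lift g' s
  edge_char : ∀ e : {e : I.V × I.V // e ∈ I.E}, ∀ g g' : G,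
    g⁻¹ * g' ∈ Ge e ↔ C.ge e.1 (lift g) = C.ge e.1 (lift g')
  triv_inter : (⨅ s : {v // v ∈ I.S}, Gs s) = ⊥

/-!
Let `H` be the intersection of the subgroups of the edges entering a terminal `t`. The group
elements of a coset `gH` send the same messages into `t`, so they are decoded alike. If
`H ≰ G_s` for a demanded source `s`, right translation by some `h ∈ H \ G_s` therefore maps the
correctly decoded group elements to incorrectly decoded ones, so at most half of `G`, and by
balancedness at most half of the messages, are decoded correctly, contradicting `ε < 1/2`.
Hence `H ≤ G_s`: the messages entering `t` determine every source it demands, and the decoder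
that outputs the sources of any group element consistent with them never errs. The code keeps
its encoders, hence its group characterization.
-/

attribute [instance] GroupChar.grp GroupChar.fin

theorem Finset.two_mul_card_le_of_forall_mul_notMem {G : Type*} [Group G] [Fintype G]
    (D : Finset G) (h : G) (hD : ∀ g ∈ D, g * h ∉ D) : 2 * #D ≤ Fintype.card G := by
  have hdisj : Disjoint D (D.map (Equiv.mulRight h).toEmbedding) := by
    rw [Finset.disjoint_right]
    rintro _ hgh hg
    obtain ⟨g, hgD, rfl⟩ := Finset.mem_map.mp hgh
    exact hD g hgD hg
  calc 2 * #D = #(D ∪ D.map (Equiv.mulRight h).toEmbedding) := by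
        rw [Finset.card_union_of_disjoint hdisj, Finset.card_map, two_mul]
    _ ≤ Fintype.card G := Finset.card_le_univ _

theorem Fintype.card_filter_comp_mul_card_eq {α β : Type*} [Fintype α] [Fintype β]
    [DecidableEq β] (f : α → β) (hf : ∀ b, #{a | f a = b} * Fintype.card β = Fintype.card α)
    (p : β → Prop) [DecidablePred p] :
    #{a | p (f a)} * Fintype.card β = #{b | p b} * Fintype.card α := by
  rw [Finset.card_eq_sum_card_fiberwise (f := f) (t := {b | p b})
    (fun a ha => by simpa using ha), Finset.sum_mul, ← smul_eq_mul, ← Finset.sum_const]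
  refine Finset.sum_congr rfl fun b hb => ?_
  rw [← hf b]
  congr 2
  ext a
  simp only [Finset.mem_filter, Finset.mem_univ, true_and] at hb ⊢
  exact ⟨fun h => h.2, fun h => ⟨h ▸ hb, h⟩⟩

theorem Function.surjective_of_card_fiber_mul_card_eq {α β : Type*} [Fintype α] [Fintype β]
    [DecidableEq β] [Nonempty α] (f : α → β)
    (hf : ∀ b, #{a | f a = b} * Fintype.card β = Fintype.card α) :
    Function.Surjective f := by
  intro b
  by_contra hb
  push Not at hb
  have := hf b
  rw [Finset.filter_false_of_mem fun a _ => hb a, Finset.card_empty, zero_mul] at this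
  exact Fintype.card_ne_zero this.symm

namespace NetworkCode

variable {I : NetworkInstance} {R : I.V → ℝ} {n : ℕ} (C : NetworkCode I R n)

theorem card_lt_two_mul_card_correct {ε : ℝ} (hA : C.Achieves ε) (hε : ε < 1/2)
    (t : {v // v ∈ I.T}) : Fintype.card C.Msg < 2 * #{x | C.Correct t x} := by
  have hsplit := Finset.card_filter_add_card_filter_not (s := Finset.univ)
    (fun x => C.Correct t x)
  rw [Finset.card_univ] at hsplit
  have hpos : (0 : ℝ) < Fintype.card C.Msg := by exact_mod_cast Fintype.card_pos
  have hbad : (2 * #{x | ¬ C.Correct t x} : ℝ) < Fintype.card C.Msg := by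
    nlinarith [hA t]
  have : 2 * #{x | ¬ C.Correct t x} < Fintype.card C.Msg := by exact_mod_cast hbad
  omega

end NetworkCode

namespace GroupChar

variable {I : NetworkInstance} {R : I.V → ℝ} {n : ℕ} {C : NetworkCode I R n} (gc : GroupChar C)

theorem lift_surjective : Function.Surjective gc.lift :=
  Function.surjective_of_card_fiber_mul_card_eq gc.lift gc.balanced

theorem mem_Gs_of_correct_of_correct_mul {t : {v // v ∈ I.T}} {h : gc.G}
    (hh : ∀ f : {e : I.V × I.V // e ∈ I.E ∧ e.2 = t.1}, h ∈ gc.Ge ⟨f.1, f.2.1⟩)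
    (s : {v // v ∈ I.S ∧ I.demands v t.1}) {g : gc.G}
    (hg : C.Correct t (gc.lift g)) (hgh : C.Correct t (gc.lift (g * h))) :
    h ∈ gc.Gs ⟨s.1, s.2.1⟩ := by
  have hin : (fun f : {e : I.V × I.V // e ∈ I.E ∧ e.2 = t.1} => C.ge f.1 (gc.lift g)) =
      fun f : {e : I.V × I.V // e ∈ I.E ∧ e.2 = t.1} => C.ge f.1 (gc.lift (g * h)) :=
    funext fun f => (gc.edge_char ⟨f.1, f.2.1⟩ g (g * h)).mp (by simpa using hh f)
  have hsrc := congrFun (hg.symm.trans ((congrArg (C.dec t) hin).trans hgh)) s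
  simpa using (gc.src_char ⟨s.1, s.2.1⟩ g (g * h)).mpr hsrc

theorem mem_Gs_of_forall_mem_Ge {t : {v // v ∈ I.T}}
    (hgood : Fintype.card C.Msg < 2 * #{x | C.Correct t x}) {h : gc.G}
    (hh : ∀ f : {e : I.V × I.V // e ∈ I.E ∧ e.2 = t.1}, h ∈ gc.Ge ⟨f.1, f.2.1⟩)
    (s : {v // v ∈ I.S ∧ I.demands v t.1}) : h ∈ gc.Gs ⟨s.1, s.2.1⟩ := by
  by_contra hs
  have hhalf := Finset.two_mul_card_le_of_forall_mul_notMem {g | C.Correct t (gc.lift g)} h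
    fun g hg hgh => hs <| gc.mem_Gs_of_correct_of_correct_mul hh s
      (Finset.mem_filter.mp hg).2 (Finset.mem_filter.mp hgh).2
  have htransfer := Fintype.card_filter_comp_mul_card_eq gc.lift gc.balanced
    (fun x => C.Correct t x)
  have hG : 0 < Fintype.card gc.G := Fintype.card_pos
  nlinarith [Nat.mul_lt_mul_of_pos_right hgood hG,
    Nat.mul_le_mul_right (Fintype.card C.Msg) hhalf]

theorem lift_eq_of_ge_lift_eq {t : {v // v ∈ I.T}}
    (hgood : Fintype.card C.Msg < 2 * #{x | C.Correct t x}) {g g' : gc.G}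
    (hgg' : ∀ f : {e : I.V × I.V // e ∈ I.E ∧ e.2 = t.1},
      C.ge f.1 (gc.lift g) = C.ge f.1 (gc.lift g'))
    (s : {v // v ∈ I.S ∧ I.demands v t.1}) :
    gc.lift g ⟨s.1, s.2.1⟩ = gc.lift g' ⟨s.1, s.2.1⟩ :=
  (gc.src_char _ g g').mp <| gc.mem_Gs_of_forall_mem_Ge hgood
    (fun f => (gc.edge_char ⟨f.1, f.2.1⟩ g g').mpr (hgg' f)) s

def zeroErrorCode : NetworkCode I R n :=
  { C with
    dec := fun t msgs s => gc.lift (Classical.epsilon fun g : gc.G =>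
      ∀ f : {e : I.V × I.V // e ∈ I.E ∧ e.2 = t.1}, C.ge f.1 (gc.lift g) = msgs f) ⟨s.1, s.2.1⟩ }

theorem zeroErrorCode_achieves_zero
    (hgood : ∀ t, Fintype.card C.Msg < 2 * #{x | C.Correct t x}) :
    gc.zeroErrorCode.Achieves 0 := by
  intro t
  suffices hcorrect : ∀ x, gc.zeroErrorCode.Correct t x by simp [hcorrect]
  intro x
  obtain ⟨g, rfl⟩ := gc.lift_surjective x
  have hspec := Classical.epsilon_spec (p := fun g' : gc.G =>
    ∀ f : {e : I.V × I.V // e ∈ I.E ∧ e.2 = t.1}, C.ge f.1 (gc.lift g') = C.ge f.1 (gc.lift g))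
    ⟨g, fun _ => rfl⟩
  funext s
  exact gc.lift_eq_of_ge_lift_eq (hgood t) hspec s

def toZeroErrorCode : GroupChar gc.zeroErrorCode := { gc with }

end GroupChar

theorem group_code_eps_error_to_zero_error_general
    (I : NetworkInstance) (ε : ℝ) (R : I.V → ℝ) (n : ℕ)
    (hε : ε < 1/2)
    (h : ∃ C : NetworkCode I R n, C.Achieves ε ∧ Nonempty (GroupChar C)) :
    ∃ C : NetworkCode I R n, C.Achieves 0 ∧ Nonempty (GroupChar C) := by
  obtain ⟨C, hA, ⟨gc⟩⟩ := h
  exact ⟨gc.zeroErrorCode,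
    gc.zeroErrorCode_achieves_zero (C.card_lt_two_mul_card_correct hA hε), ⟨gc.toZeroErrorCode⟩⟩

/-- **Theorem 4.** For `0 < ε < 1/2`: if `I` is `(ε,R,n)`-feasible by a group network code,
then `I` is `(0,R,n)`-feasible by a group network code. -/
theorem group_code_eps_error_to_zero_error
    (I : NetworkInstance) (ε : ℝ) (R : I.V → ℝ) (n : ℕ)
    (hε0 : 0 < ε) (hε : ε < 1/2)
    (h : ∃ C : NetworkCode I R n, C.Achieves ε ∧ Nonempty (GroupChar C)) :
    ∃ C : NetworkCode I R n, C.Achieves 0 ∧ Nonempty (GroupChar C) :=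
  group_code_eps_error_to_zero_error_general I ε R n hε h

end
end

section
/- Let m ≥ 2 and α ≥ 1 be integers, and let s be an integer with gcd(m, s) = 1. For each integer a with 0 ≤ a < m^{α+1}, define π₂(a) = m·(a mod m^α) + ⌊a / m^α⌋ (the cyclic rotation of the base-m digit string of a: if a = Σ_{i=0}^{α} m^i a_i with 0 ≤ a_i < m, then π₂(a) = a_α + Σ_{i=0}^{α−1} m^{i+1} a_i). Then the map from Z_{m^{α+1}} to Z_{m^{α+1}} × Z_{m^{α+1}} given by a ↦ (m·a mod m^{α+1}, s·m^α·π₂(a) mod m^{α+1}) is injective. -/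
/-!
Write `M = m^α`, so that `a = M * (a / M) + a % M` with top digit `a / M < m`. Cancelling `m`
from `m * a ≡ m * b [MOD m * M]` gives `a ≡ b [MOD M]`. In the second coordinate every digit of
`π₂(a)` except the lowest one, `a / M`, is multiplied by `m * M` and vanishes, so it equals
`M * (s * (a / M))` modulo `m * M`; cancelling `M` and then the unit `s` mod `m` recovers `a / M`.
-/

/-- The cyclic rotation `π₂` of the base-`m` digits of `x < m * M` when `M = m ^ α`. -/
def rotateDigits (m M x : ℕ) : ℕ := m * (x % M) + x / M

theorem mul_rotateDigits_modEq (m M s x : ℕ) :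
    s * M * rotateDigits m M x ≡ M * (s * (x / M)) [MOD m * M] := by
  have h : s * M * rotateDigits m M x = m * M * (s * (x % M)) + M * (s * (x / M)) := by
    unfold rotateDigits
    ring
  rw [h]
  exact Nat.mul_add_mod _ _ _

theorem modEq_of_mul_modEq_mul {m M a b : ℕ} (ha : a < m * M)
    (h : m * a ≡ m * b [MOD m * M]) : a ≡ b [MOD M] :=
  h.mul_left_cancel' (by rintro rfl; simp at ha)

theorem div_eq_of_mul_rotateDigits_modEq {m M s a b : ℕ} (hs : m.gcd s = 1)
    (ha : a < m * M) (hb : b < m * M)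
    (h : s * M * rotateDigits m M a ≡ s * M * rotateDigits m M b [MOD m * M]) :
    a / M = b / M := by
  have hM : M ≠ 0 := by rintro rfl; simp at ha
  have hlow : M * (s * (a / M)) ≡ M * (s * (b / M)) [MOD M * m] := by
    rw [Nat.mul_comm M m]
    exact (mul_rotateDigits_modEq m M s a).symm.trans (h.trans (mul_rotateDigits_modEq m M s b))
  have hdigit : a / M ≡ b / M [MOD m] := (hlow.mul_left_cancel' hM).cancel_left_of_coprime hs
  rw [Nat.mul_comm] at ha hb
  exact hdigit.eq_of_lt_of_lt (Nat.div_lt_of_lt_mul ha) (Nat.div_lt_of_lt_mul hb)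

theorem rotation_decoding_injective_general
    (m a_exp s : ℕ) (hs : Nat.gcd m s = 1) :
    ∀ a b : ℕ, a < m ^ (a_exp + 1) → b < m ^ (a_exp + 1) →
      (m * a) % m ^ (a_exp + 1) = (m * b) % m ^ (a_exp + 1) →
      (s * m ^ a_exp * (m * (a % m ^ a_exp) + a / m ^ a_exp)) % m ^ (a_exp + 1) =
        (s * m ^ a_exp * (m * (b % m ^ a_exp) + b / m ^ a_exp)) % m ^ (a_exp + 1) →
      a = b := by
  intro a b ha hb h1 h2
  rw [pow_succ'] at ha hb h1 h2
  exact Nat.ext_div_modEq (div_eq_of_mul_rotateDigits_modEq hs ha hb h2)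
    (modEq_of_mul_modEq_mul ha h1)

/-- **Injectivity of the modified decoding map for `N₃(m₁,m₂)`.**
Let `m ≥ 2`, `α ≥ 1`, `gcd(m,s) = 1`, and for `0 ≤ a < m^{α+1}` let
`π₂(a) = m·(a mod m^α) + ⌊a/m^α⌋` (cyclic rotation of the base-`m` digits of `a`).
Then `a ↦ (m·a mod m^{α+1}, s·m^α·π₂(a) mod m^{α+1})` is injective on `{0,…,m^{α+1}-1}`. -/
theorem rotation_decoding_injective
    (m a_exp s : ℕ) (hm : 2 ≤ m) (hα : 1 ≤ a_exp) (hs : Nat.gcd m s = 1) :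
    ∀ a b : ℕ, a < m ^ (a_exp + 1) → b < m ^ (a_exp + 1) →
      (m * a) % m ^ (a_exp + 1) = (m * b) % m ^ (a_exp + 1) →
      (s * m ^ a_exp * (m * (a % m ^ a_exp) + a / m ^ a_exp)) % m ^ (a_exp + 1) =
        (s * m ^ a_exp * (m * (b % m ^ a_exp) + b / m ^ a_exp)) % m ^ (a_exp + 1) →
      a = b :=
  rotation_decoding_injective_general m a_exp s hs
end

section
/- Let G be a finite group and H, K subgroups of G such that H is not contained in K. Then for every function d from the set of left cosets of H in G to the set of left cosets of K in G, the number of elements g ∈ G with g ∈ d(gH) is at most |G|/2. Equivalently: for g uniformly distributed on G, any decoder that observes the coset gH and outputs a guess for the coset gK errs with probability at least 1/2. -/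
/-! Pick `h ∈ H` with `h ∉ K`. Right multiplication by `h` keeps the coset `gH` but moves `gK`,
so it sends every element on which the decoder is correct to one on which it is wrong. Being
injective, it shows the correct elements are at most as many as the wrong ones. -/

open Finset

theorem Fintype.two_mul_card_filter_le_of_injective {α : Type*} [Fintype α] {p : α → Prop}
    [DecidablePred p] {f : α → α} (hf : Function.Injective f) (hp : ∀ a, p a → ¬ p (f a)) :
    2 * #{a | p a} ≤ Fintype.card α := by
  have hle : #{a | p a} ≤ #{a | ¬ p a} :=
    card_le_card_of_injOn f (fun a ha => by simpa using hp a (by simpa using ha)) hf.injOn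
  have hsum : #{a | p a} + #{a | ¬ p a} = Fintype.card α :=
    card_filter_add_card_filter_not p
  omega

theorem QuotientGroup.mk_mul_ne_of_map_mk_eq_mk {G : Type*} [Group G] {H K : Subgroup G}
    (d : G ⧸ H → G ⧸ K) {h : G} (hH : h ∈ H) (hK : h ∉ K) {g : G}
    (hg : d (g : G ⧸ H) = (g : G ⧸ K)) :
    d ((g * h : G) : G ⧸ H) ≠ ((g * h : G) : G ⧸ K) := by
  rw [mk_mul_of_mem g hH, hg]
  intro heq
  exact hK (by simpa using QuotientGroup.eq.mp heq)

open scoped Classical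

/-- **Claim 2.** Let `G` be a finite group and `H`, `K` subgroups with `H ⊄ K`. Then any
decoder `d` from left cosets of `H` to left cosets of `K` is correct (`g ∈ d(gH)`, i.e.
`d(gH) = gK`) on at most half of the elements `g ∈ G`: for `g` uniform on `G`, the decoder
errs with probability at least `1/2`. -/
theorem decoder_fails_half_of_not_le
    {G : Type*} [Group G] [Fintype G] (H K : Subgroup G) (hHK : ¬ H ≤ K)
    (d : G ⧸ H → G ⧸ K) :
    2 * (Finset.univ.filter fun g : G =>
        d (QuotientGroup.mk g) = (QuotientGroup.mk g : G ⧸ K)).card ≤ Fintype.card G := by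
  obtain ⟨h, hH, hK⟩ := SetLike.not_le_iff_exists.mp hHK
  exact Fintype.two_mul_card_filter_le_of_injective (mul_left_injective h)
    fun _ => QuotientGroup.mk_mul_ne_of_map_mk_eq_mk d hH hK
end

section
/- Let ι be a finite nonempty index set, let (𝒳_i)_{i∈ι} be finite nonempty sets, let S be a nonempty subset of the product ∏_{i∈ι} 𝒳_i, and let X = (X_i)_{i∈ι} be a random tuple uniformly distributed on S. If the coordinate random variables X_i, i ∈ ι, are mutually independent, then S is the product of its coordinate projections, S = {x ∈ ∏_i 𝒳_i : x(i) ∈ S_i for all i} where S_i = {a ∈ 𝒳_i : ∃ x ∈ S, x(i) = a}, each X_i is uniformly distributed on S_i, and |S| = ∏_{i∈ι} |S_i|. -/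
open scoped Classical

/-- **Lemma (independent coordinates of a uniform distribution on a set).**
Let `X = (X_i)` be uniform on a nonempty `S ⊆ ∏_i 𝒳_i`. If the coordinates `X_i` are
mutually independent, then `S` is the product of its coordinate projections `S_i`,
each `X_i` is uniform on `S_i`, and `|S| = ∏_i |S_i|`. -/
theorem uniform_indep_coords_product
    {ι : Type*} [Fintype ι] [Nonempty ι]
    (𝒳 : ι → Type*) [∀ i, Fintype (𝒳 i)] [∀ i, Nonempty (𝒳 i)]
    (S : Finset ((i : ι) → 𝒳 i)) (hS : S.Nonempty)
    (hindep : ∀ a : (i : ι) → 𝒳 i,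
      (if a ∈ S then (1 : ℝ) else 0) / (S.card : ℝ) =
        ∏ i : ι, ((S.filter fun x => x i = a i).card : ℝ) / (S.card : ℝ)) :
    S = (Finset.univ.filter fun x : (i : ι) → 𝒳 i => ∀ i, x i ∈ S.image fun y => y i) ∧
    (∀ i : ι, ∀ a ∈ S.image fun y => y i,
      (S.filter fun x => x i = a).card * (S.image fun y => y i).card = S.card) ∧
    S.card = ∏ i : ι, (S.image fun y => y i).card := by
  classical
  have hNpos : 0 < (S.card : ℝ) := by exact_mod_cast Finset.card_pos.mpr hS
  have hfpos : ∀ i (b : 𝒳 i), b ∈ (S.image fun y => y i) →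
      0 < ((S.filter fun x => x i = b).card : ℝ) := by
    intro i b hb
    obtain ⟨x, hx, hxi⟩ := Finset.mem_image.mp hb
    have : x ∈ S.filter fun x => x i = b := Finset.mem_filter.mpr ⟨hx, hxi⟩
    exact_mod_cast Finset.card_pos.mpr ⟨x, this⟩
  have hmem : ∀ a : (i : ι) → 𝒳 i, (∀ i, a i ∈ (S.image fun y => y i)) → a ∈ S := by
    intro a ha
    by_contra hanot
    have h := hindep a
    rw [if_neg hanot, zero_div] at h
    have hpos : 0 < ∏ i, ((S.filter fun x => x i = a i).card : ℝ) / (S.card : ℝ) :=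
      Finset.prod_pos fun i _ => div_pos (hfpos i (a i) (ha i)) hNpos
    rw [← h] at hpos
    exact lt_irrefl _ hpos
  have hconst : ∀ i (b c : 𝒳 i), b ∈ (S.image fun y => y i) → c ∈ (S.image fun y => y i) →
      (S.filter fun x => x i = b).card = (S.filter fun x => x i = c).card := by
    intro i b c hb hc
    obtain ⟨x, hx, hxi⟩ := Finset.mem_image.mp hb
    set a := Function.update x i c with ha
    have hai : a i = c := Function.update_self i c x
    have haj : ∀ j, j ≠ i → a j = x j := fun j hj => Function.update_of_ne hj c x
    have haS : a ∈ S := by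
      apply hmem
      intro j
      by_cases hj : j = i
      · subst hj; rw [hai]; exact hc
      · rw [haj j hj]; exact Finset.mem_image.mpr ⟨x, hx, rfl⟩
    have h1 := hindep x; rw [if_pos hx] at h1
    have h2 := hindep a; rw [if_pos haS] at h2
    have heq : (∏ j, ((S.filter fun y => y j = x j).card : ℝ) / (S.card : ℝ)) =
        ∏ j, ((S.filter fun y => y j = a j).card : ℝ) / (S.card : ℝ) :=
      h1.symm.trans h2
    rw [← Finset.prod_erase_mul Finset.univ _ (Finset.mem_univ i),
        ← Finset.prod_erase_mul Finset.univ _ (Finset.mem_univ i)] at heq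
    have hP : (∏ j ∈ Finset.univ.erase i,
          ((S.filter fun y => y j = x j).card : ℝ) / (S.card : ℝ)) =
        ∏ j ∈ Finset.univ.erase i,
          ((S.filter fun y => y j = a j).card : ℝ) / (S.card : ℝ) := by
      apply Finset.prod_congr rfl
      intro j hj
      rw [haj j (Finset.ne_of_mem_erase hj)]
    rw [← hP] at heq
    have hPpos : 0 < ∏ j ∈ Finset.univ.erase i,
        ((S.filter fun y => y j = x j).card : ℝ) / (S.card : ℝ) := by
      apply Finset.prod_pos
      intro j _
      exact div_pos (hfpos j (x j) (Finset.mem_image.mpr ⟨x, hx, rfl⟩)) hNpos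
    have hkey := mul_left_cancel₀ (ne_of_gt hPpos) heq
    rw [hxi, hai] at hkey
    field_simp at hkey
    exact_mod_cast hkey
  have part2 : ∀ i : ι, ∀ b ∈ (S.image fun y => y i),
      (S.filter fun x => x i = b).card * (S.image fun y => y i).card = S.card := by
    intro i b hb
    have hsum : S.card = ∑ c ∈ S.image fun y => y i, (S.filter fun x => x i = c).card :=
      Finset.card_eq_sum_card_image _ S
    have hcc : ∑ c ∈ S.image fun y => y i, (S.filter fun x => x i = c).card =
        ∑ c ∈ S.image fun y => y i, (S.filter fun x => x i = b).card :=
      Finset.sum_congr rfl fun c hc => hconst i c b hc hb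
    rw [hcc, Finset.sum_const, smul_eq_mul] at hsum
    rw [hsum]; ring
  refine ⟨?_, part2, ?_⟩
  · ext a
    simp only [Finset.mem_filter, Finset.mem_univ, true_and]
    constructor
    · intro ha i; exact Finset.mem_image.mpr ⟨a, ha, rfl⟩
    · exact hmem a
  · obtain ⟨x, hx⟩ := hS
    have h1 := hindep x; rw [if_pos hx] at h1
    have hSipos : ∀ i : ι, 0 < ((S.image fun y => y i).card : ℝ) := by
      intro i
      exact_mod_cast Finset.card_pos.mpr ⟨x i, Finset.mem_image.mpr ⟨x, hx, rfl⟩⟩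
    have h2 : ∀ i : ι, ((S.filter fun y => y i = x i).card : ℝ) / (S.card : ℝ) =
        1 / ((S.image fun y => y i).card : ℝ) := by
      intro i
      have hp := part2 i (x i) (Finset.mem_image.mpr ⟨x, hx, rfl⟩)
      have h' : ((S.filter fun y => y i = x i).card : ℝ) *
          ((S.image fun y => y i).card : ℝ) = (S.card : ℝ) := by exact_mod_cast hp
      rw [div_eq_div_iff (ne_of_gt hNpos) (ne_of_gt (hSipos i))]
      linarith [h']
    rw [Finset.prod_congr rfl (fun i _ => h2 i)] at h1
    have hfin : (S.card : ℝ) = ∏ i : ι, ((S.image fun y => y i).card : ℝ) := by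
      rw [Finset.prod_div_distrib, Finset.prod_const_one] at h1
      have hprodpos : 0 < ∏ i : ι, ((S.image fun y => y i).card : ℝ) :=
        Finset.prod_pos fun i _ => hSipos i
      field_simp at h1
      linarith [h1]
    exact_mod_cast hfin
end

section
/- Let {G_i : i ∈ S} and G_e be finite groups and φ : ∏_{i∈S} G_i → G_e a surjective group homomorphism. Let X_S = (X_i)_{i∈S} be uniformly distributed on ∏_{i∈S} G_i and X_e = φ(X_S). Then the random variables {X_f : f ∈ S ∪ {e}} are group characterizable: there exists a finite group G' with subgroups {G'_f : f ∈ S ∪ {e}} such that for every subset α ⊆ S ∪ {e}, the joint Shannon entropy satisfies H((X_f)_{f∈α}) = log(|G'| / |∩_{f∈α} G'_f|). (Concretely, one may take G' = ∏_{i∈S} G_i, G'_i = the subgroup of tuples whose i-th coordinate is the identity, and G'_e = ker φ; the group G' need not be Abelian.) -/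
open scoped Classical

noncomputable section

/-- A group characterization of a finite family of finite random variables
`X f : Ω → fam f` (on the finite uniform sample space `Ω`): a finite group `G'` with
subgroups `G'_f` such that the joint entropy of every subfamily `α` satisfies
`H((X_f)_{f∈α}) = log₂(|G'| / |⋂_{f∈α} G'_f|)`. -/
structure GroupCharacterization {Ω : Type*} [Fintype Ω] {F : Type*} [Fintype F]
    (fam : F → Type*) [∀ f, Fintype (fam f)] (X : (f : F) → Ω → fam f) where
  G' : Type
  [grp : Group G']
  [fin : Fintype G']
  Gf : F → Subgroup G'
  entropy_eq : ∀ α : Finset F,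
    Hent (fun ω => fun f : {f // f ∈ α} => X f.1 ω) =
      Real.logb 2 ((Fintype.card G' : ℝ) / (Nat.card ↥(⨅ f ∈ α, Gf f) : ℝ))

instance sumElimFintype {ι : Type} (G : ι → Type) [∀ i, Fintype (G i)]
    (Ge : Type) [Fintype Ge] :
    ∀ f : ι ⊕ Unit, Fintype (Sum.elim G (fun _ : Unit => Ge) f)
  | Sum.inl i => inferInstanceAs (Fintype (G i))
  | Sum.inr _ => inferInstanceAs (Fintype Ge)

lemma hent_of_coset {G : Type*} [Group G] [Fintype G] {β : Type*} [Fintype β]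
    (Z : G → β) (N : Subgroup G)
    (h : ∀ a b : G, Z a = Z b ↔ a⁻¹ * b ∈ N) :
    Hent Z = Real.logb 2 ((Fintype.card G : ℝ) / (Nat.card N : ℝ)) := by
  classical
  have hn : (Nat.card N : ℝ) ≠ 0 := by
    have : 0 < Nat.card N := Nat.card_pos
    positivity
  have hm : (Fintype.card G : ℝ) ≠ 0 := by
    have : 0 < Fintype.card G := Fintype.card_pos
    positivity
  -- fiber cardinality
  have fiber : ∀ a : G, (Finset.univ.filter fun b => Z b = Z a).card = Nat.card N := by
    intro a
    have : (Finset.univ.filter fun b => Z b = Z a) =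
        Finset.univ.image (fun x : N => a * (x : G)) := by
      ext b
      simp only [Finset.mem_filter, Finset.mem_univ, true_and, Finset.mem_image]
      constructor
      · intro hb
        have := (h a b).mp hb.symm
        exact ⟨⟨a⁻¹ * b, this⟩, mul_inv_cancel_left a b⟩
      · rintro ⟨⟨x, hx⟩, rfl⟩
        exact ((h a (a * x)).mpr (by rwa [inv_mul_cancel_left])).symm
    rw [this, Finset.card_image_of_injective _ (fun x y hxy => Subtype.ext (mul_left_cancel hxy)), Finset.card_univ, Nat.card_eq_fintype_card]
  set T := Finset.univ.image Z with hT
  have hcount : Fintype.card G = T.card * Nat.card N := by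
    have := Finset.card_eq_sum_card_image Z (Finset.univ : Finset G)
    rw [Finset.card_univ] at this
    rw [this, ← hT]
    rw [Finset.sum_congr rfl (fun z hz => ?_), Finset.sum_const, smul_eq_mul]
    rw [hT] at hz
    obtain ⟨a, -, rfl⟩ := Finset.mem_image.mp hz
    exact fiber a
  have hprob : ∀ z ∈ T, prob Z z = (Nat.card N : ℝ) / (Fintype.card G : ℝ) := by
    intro z hz
    obtain ⟨a, -, rfl⟩ := Finset.mem_image.mp hz
    rw [prob, fiber a]
  have hzero : ∀ z ∉ T, prob Z z = 0 := by
    intro z hz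
    have : (Finset.univ.filter fun ω => Z ω = z) = ∅ := by
      ext b; simp only [Finset.mem_filter, Finset.mem_univ, true_and, Finset.notMem_empty,
        iff_false]
      intro hb; exact hz (by rw [← hb]; exact Finset.mem_image_of_mem Z (Finset.mem_univ b))
    rw [prob, this]; simp
  have hsum : (∑ z : β, Real.negMulLog (prob Z z)) =
      T.card * Real.negMulLog ((Nat.card N : ℝ) / (Fintype.card G : ℝ)) := by
    rw [← Finset.sum_subset (Finset.subset_univ T)
      (by intro z _ hz; rw [hzero z hz, Real.negMulLog_zero])]
    rw [Finset.sum_congr rfl (fun z hz => by rw [hprob z hz]), Finset.sum_const, nsmul_eq_mul]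
  have hTn : (T.card : ℝ) * (Nat.card N : ℝ) = (Fintype.card G : ℝ) := by
    exact_mod_cast hcount.symm
  set n : ℝ := (Nat.card N : ℝ)
  set m : ℝ := (Fintype.card G : ℝ)
  have hk : (T.card : ℝ) * (n / m) = 1 := by
    field_simp
    linarith [hTn]
  have key : (T.card : ℝ) * Real.negMulLog (n / m) = Real.log (m / n) := by
    rw [Real.negMulLog]
    have : (T.card : ℝ) * (-(n / m) * Real.log (n / m)) =
        -((T.card : ℝ) * (n / m) * Real.log (n / m)) := by ring
    rw [this, hk, one_mul, ← Real.log_inv, inv_div]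
  rw [Hent, hsum, key, Real.logb]

def cwlGf {ι : Type} (G : ι → Type) [∀ i, Group (G i)]
    {Ge : Type} [Group Ge] (φ : ((i : ι) → G i) →* Ge) :
    ι ⊕ Unit → Subgroup ((i : ι) → G i)
  | Sum.inl i => (Pi.evalMonoidHom G i).ker
  | Sum.inr _ => φ.ker

lemma mem_cwlGf_inl {ι : Type} (G : ι → Type) [∀ i, Group (G i)]
    {Ge : Type} [Group Ge] (φ : ((i : ι) → G i) →* Ge) (i : ι) (x : (i : ι) → G i) :
    x ∈ cwlGf G φ (Sum.inl i) ↔ x i = 1 := by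
  simp [cwlGf, MonoidHom.mem_ker, Pi.evalMonoidHom]

lemma mem_cwlGf_inr {ι : Type} (G : ι → Type) [∀ i, Group (G i)]
    {Ge : Type} [Group Ge] (φ : ((i : ι) → G i) →* Ge) (u : Unit) (x : (i : ι) → G i) :
    x ∈ cwlGf G φ (Sum.inr u) ↔ φ x = 1 := Iff.rfl

/-- **Claim 4 (CWL functions are group characterizable).**
Let `φ : ∏_{i∈S} G_i → G_e` be a surjective homomorphism of finite groups, let
`X_S = (X_i)_{i∈S}` be uniform on `∏_i G_i` and `X_e = φ(X_S)`. Then the family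
`{X_f : f ∈ S ∪ {e}}` is group characterizable (by a group that need not be Abelian). -/
theorem CWL_is_group_characterizable
    {ι : Type} [Fintype ι] [DecidableEq ι]
    (G : ι → Type) [∀ i, Group (G i)] [∀ i, Fintype (G i)]
    (Ge : Type) [Group Ge] [Fintype Ge]
    (φ : ((i : ι) → G i) →* Ge) (hsurj : Function.Surjective φ) :
    Nonempty (GroupCharacterization (Ω := (i : ι) → G i)
      (fam := Sum.elim G fun _ : Unit => Ge)
      (fun f => match f with
        | Sum.inl i => fun ω => ω i
        | Sum.inr _ => fun ω => φ ω)) := by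
  classical
  refine ⟨{ G' := (i : ι) → G i
            grp := inferInstance
            fin := inferInstance
            Gf := cwlGf G φ
            entropy_eq := ?_ }⟩
  intro α
  have key := hent_of_coset (fun ω => fun f : {f // f ∈ α} =>
      (match f.1 with
        | Sum.inl i => fun ω => ω i
        | Sum.inr _ => fun ω => φ ω : ((i : ι) → G i) → Sum.elim G (fun _ : Unit => Ge) f.1) ω)
      (⨅ f ∈ α, cwlGf G φ f) ?_
  · convert key using 2 <;> congr!
  intro a b
  rw [funext_iff, Subgroup.mem_iInf]
  simp_rw [Subgroup.mem_iInf]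
  constructor
  · intro hab f hf
    have h1 := hab ⟨f, hf⟩
    match f with
    | Sum.inl i =>
      have h2 : a i = b i := h1
      rw [mem_cwlGf_inl]
      simp [Pi.mul_apply, Pi.inv_apply, h2]
    | Sum.inr u =>
      have h2 : φ a = φ b := h1
      rw [mem_cwlGf_inr, map_mul, map_inv, h2, inv_mul_cancel]
  · intro hmem
    rintro ⟨f, hf⟩
    have h1 := hmem f hf
    match f with
    | Sum.inl i =>
      rw [mem_cwlGf_inl] at h1
      have h2 : (a i)⁻¹ * b i = 1 := h1
      show a i = b i
      exact inv_mul_eq_one.mp h2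
    | Sum.inr u =>
      rw [mem_cwlGf_inr, map_mul, map_inv] at h1
      show φ a = φ b
      exact inv_mul_eq_one.mp h1


end
end
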